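/- Let N be a sum-GNN with L layers and let D′ ⊆ D be datasets. For every vertex v of enc(D′), every layer ℓ ∈ {0,…,L}, and every channel i ∈ {1,…,δ_ℓ}, the following hold, where v_ℓ and v′_ℓ are the vectors computed for v in layer ℓ when N is applied to enc(D) and enc(D′) respectively: (1) if i is stable at layer ℓ then v′_ℓ[i] = v_ℓ[i]; (2) if i is increasing at layer ℓ then v′_ℓ[i] ≤ v_ℓ[i]; (3) if i is decreasing at layer ℓ then v′_ℓ[i] ≥ v_ℓ[i]. -/

import Mathlib

/-! ## Sum-GNNs, the canonical encoding/decoding and transformation, and Datalog -/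

/-- A fact over the GNN signature: a unary fact `U_p(a)` for a channel/unary predicate
`p : Fin δ`, or a binary fact `R^c(a,b)` for a colour/binary predicate `c : Col`.
Constants are modelled as natural numbers.  A dataset is a (finite) set of facts. -/
inductive GFact (Col : Type) (δ : ℕ) : Type
  | unary (p : Fin δ) (a : ℕ)
  | binary (c : Col) (a b : ℕ)

/-- A sum-GNN with `L ≥ 1` layers over the colour set `Col`: layer `ℓ ∈ {1,…,L}` uses the
matrix `A ℓ` (of dimension `δ ℓ × δ (ℓ-1)`), the matrices `B c ℓ` for each colour `c`,
the bias vector `bias ℓ`, and the monotonically increasing activation function `act ℓ`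
with non-negative range; `t` is the threshold of the step classification function
`cls_t`, which outputs `1` on input `x` iff `t ≤ x`.  Dimensions satisfy `δ L = δ 0`. -/
structure SumGNN (Col : Type) : Type where
  L : ℕ
  hL : 1 ≤ L
  δ : ℕ → ℕ
  hδL : δ L = δ 0
  A : (ℓ : ℕ) → Fin (δ ℓ) → Fin (δ (ℓ - 1)) → ℝ
  B : Col → (ℓ : ℕ) → Fin (δ ℓ) → Fin (δ (ℓ - 1)) → ℝ
  bias : (ℓ : ℕ) → Fin (δ ℓ) → ℝ
  act : ℕ → ℝ → ℝ
  act_mono : ∀ ℓ, Monotone (act ℓ)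
  act_nonneg : ∀ ℓ x, 0 ≤ act ℓ x
  t : ℝ

variable {Col : Type} {δ : ℕ}

open Classical

/-- The constants occurring in a fact. -/
def GFact.constants : GFact Col δ → Set ℕ
  | .unary _ a => {a}
  | .binary _ a b => {a, b}

/-- The constants occurring in a dataset. -/
def constsOf (D : Set (GFact Col δ)) : Set ℕ := ⋃ f ∈ D, f.constants

/-- The real vector labelling the vertex `v_a` of the canonical encoding `enc D` of the
dataset `D` at layer `ℓ` when the sum-GNN `N` is applied to `enc D`:  at layer `0` it is
the Boolean labelling of `enc D` (channel `i` is `1` iff `U_i(a) ∈ D`), and at layer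
`ℓ+1` it is `act (ℓ+1) (bias + A ·(previous vector) + Σ_c B^c ·(Σ_{c-neighbours} their
previous vectors))`, computed componentwise. -/
noncomputable def gnnVal [Fintype Col] (N : SumGNN Col) (D : Set (GFact Col (N.δ 0))) :
    (ℓ : ℕ) → ℕ → Fin (N.δ ℓ) → ℝ
  | 0, a, i => if GFact.unary i a ∈ D then 1 else 0
  | (ℓ + 1), a, i =>
      N.act (ℓ + 1) (N.bias (ℓ + 1) i
        + (∑ j : Fin (N.δ ℓ), N.A (ℓ + 1) i j * gnnVal N D ℓ a j)
        + ∑ c : Col, ∑ j : Fin (N.δ ℓ),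
            N.B c (ℓ + 1) i j * ∑ᶠ b ∈ {b : ℕ | GFact.binary c a b ∈ D}, gnnVal N D ℓ b j)

/-- The canonical dataset transformation `T_N` induced by the sum-GNN `N`:
`T_N(D) = dec(N(enc(D)))`, i.e. it contains the unary fact `U_p(a)` for each constant
`a` of `D` and each channel `p` such that the classification function `cls_t` outputs
`1` on the `p`-th component of the layer-`L` vector of the vertex `v_a`. -/
def TN [Fintype Col] (N : SumGNN Col) (D : Set (GFact Col (N.δ 0))) :
    Set (GFact Col (N.δ 0)) :=
  { f | ∃ a ∈ constsOf D, ∃ p : Fin (N.δ 0),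
      f = GFact.unary p a ∧ N.t ≤ gnnVal N D N.L a (Fin.cast N.hδL.symm p) }

/-! ### Datalog -/

/-- A term: a variable or a constant (both drawn from countably infinite sets). -/
inductive DTerm : Type
  | var (x : ℕ)
  | const (a : ℕ)

/-- An atom over the GNN signature, possibly mentioning variables. -/
inductive DAtom (Col : Type) (δ : ℕ) : Type
  | unary (p : Fin δ) (t : DTerm)
  | binary (c : Col) (t₁ t₂ : DTerm)

/-- A body literal: an atom or an inequality `t₁ ≉ t₂`. -/
inductive DLit (Col : Type) (δ : ℕ) : Type
  | atom (a : DAtom Col δ)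
  | neq (t₁ t₂ : DTerm)

/-- Applying a substitution (a map from variables to constants) to a term. -/
def DTerm.subst (ν : ℕ → ℕ) : DTerm → ℕ
  | .var x => ν x
  | .const a => a

/-- Applying a substitution to an atom, producing a ground atom (a fact). -/
def DAtom.subst (ν : ℕ → ℕ) : DAtom Col δ → GFact Col δ
  | .unary p t => .unary p (t.subst ν)
  | .binary c t₁ t₂ => .binary c (t₁.subst ν) (t₂.subst ν)

/-- The variables of a term. -/
def DTerm.varList : DTerm → List ℕ
  | .var x => [x]
  | .const _ => []

/-- The variables of an atom. -/
def DAtom.varList : DAtom Col δ → List ℕ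
  | .unary _ t => t.varList
  | .binary _ t₁ t₂ => t₁.varList ++ t₂.varList

/-- The variables of a literal. -/
def DLit.varList : DLit Col δ → List ℕ
  | .atom a => a.varList
  | .neq t₁ t₂ => t₁.varList ++ t₂.varList

/-- A Datalog rule `B₁ ∧ … ∧ Bₙ → H`: each inequality in the body mentions two
different terms, and every variable of the rule occurs in some body atom. -/
structure DRule (Col : Type) (δ : ℕ) : Type where
  body : List (DLit Col δ)
  head : DAtom Col δ
  neq_distinct : ∀ t₁ t₂ : DTerm, DLit.neq t₁ t₂ ∈ body → t₁ ≠ t₂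
  safe : ∀ x ∈ head.varList ++ body.flatMap DLit.varList,
      ∃ a : DAtom Col δ, DLit.atom a ∈ body ∧ x ∈ a.varList

/-- The variables of a rule, as a finite set. -/
def DRule.varFinset (r : DRule Col δ) : Finset ℕ :=
  (r.head.varList ++ r.body.flatMap DLit.varList).toFinset

/-- Satisfaction of a ground literal in a dataset: `D ⊨ B` iff `B ∈ D` for a ground atom
`B`, and `D ⊨ a₁ ≉ a₂` iff `a₁ ≠ a₂`. -/
def DLit.sat (D : Set (GFact Col δ)) (ν : ℕ → ℕ) : DLit Col δ → Prop
  | .atom a => a.subst ν ∈ D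
  | .neq t₁ t₂ => t₁.subst ν ≠ t₂.subst ν

/-- The immediate consequence operator `T_r` of a rule `r`: `T_r(D)` contains `Hν` for
each substitution `ν` such that `D ⊨ Bᵢν` for every body literal `Bᵢ`. -/
def Tr (r : DRule Col δ) (D : Set (GFact Col δ)) : Set (GFact Col δ) :=
  { f | ∃ ν : ℕ → ℕ, (∀ B ∈ r.body, B.sat D ν) ∧ f = r.head.subst ν }

/-- The immediate consequence operator of a program: `T_P(D) = ⋃_{r ∈ P} T_r(D)`. -/
def TP (P : List (DRule Col δ)) (D : Set (GFact Col δ)) : Set (GFact Col δ) :=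
  ⋃ r ∈ P, Tr r D

/-- The dataset `D_r^ν` consisting of `Bᵢν` for each body atom `Bᵢ` of the rule `r`. -/
def bodyDataset (r : DRule Col δ) (ν : ℕ → ℕ) : Set (GFact Col δ) :=
  { f | ∃ a : DAtom Col δ, DLit.atom a ∈ r.body ∧ f = a.subst ν }

/-! ### Channel classification -/

/-- `Safe N ℓ i`: channel `i` is safe at layer `ℓ`.  Every channel is safe at layer `0`;
a channel `i` is safe at layer `ℓ+1` if the `i`-th row of `A (ℓ+1)` and of each
`B c (ℓ+1)` contains only non-negative values and the `j`-th entry of each such row is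
zero for every `j` unsafe at layer `ℓ`. -/
def Safe (N : SumGNN Col) : (ℓ : ℕ) → Fin (N.δ ℓ) → Prop
  | 0, _ => True
  | (ℓ + 1), i =>
      (∀ j, 0 ≤ N.A (ℓ + 1) i j) ∧ (∀ c : Col, ∀ j, 0 ≤ N.B c (ℓ + 1) i j) ∧
      (∀ j : Fin (N.δ ℓ), ¬ Safe N ℓ j →
        N.A (ℓ + 1) i j = 0 ∧ ∀ c : Col, N.B c (ℓ + 1) i j = 0)

/-- The classification of channel `i` at layer `ℓ` as a triple of propositions
`(stable, increasing, decreasing)`.  All channels are increasing (and neither stable nor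
decreasing) at layer `0`; the classification at layer `ℓ+1` is as in the paper. -/
def chClass (N : SumGNN Col) : (ℓ : ℕ) → Fin (N.δ ℓ) → Prop × Prop × Prop
  | 0, _ => (False, True, False)
  | (ℓ + 1), i =>
      let St : Fin (N.δ ℓ) → Prop := fun j => (chClass N ℓ j).1
      let Inc : Fin (N.δ ℓ) → Prop := fun j => (chClass N ℓ j).2.1
      let Dec : Fin (N.δ ℓ) → Prop := fun j => (chClass N ℓ j).2.2
      let Und : Fin (N.δ ℓ) → Prop := fun j => ¬ St j ∧ ¬ Inc j ∧ ¬ Dec j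
      let stable : Prop :=
        (∀ c : Col, ∀ j, N.B c (ℓ + 1) i j = 0) ∧
        (∀ j, N.A (ℓ + 1) i j ≠ 0 → St j)
      let inc : Prop := ¬ stable ∧ ∀ j,
        (Inc j → 0 ≤ N.A (ℓ + 1) i j) ∧
        (Dec j → N.A (ℓ + 1) i j ≤ 0 ∧ ∀ c : Col, N.B c (ℓ + 1) i j = 0) ∧
        (Und j → N.A (ℓ + 1) i j = 0 ∧ ∀ c : Col, N.B c (ℓ + 1) i j = 0) ∧
        (∀ c : Col, 0 ≤ N.B c (ℓ + 1) i j)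
      let dec : Prop := ¬ stable ∧ ∀ j,
        (Inc j → N.A (ℓ + 1) i j ≤ 0) ∧
        (Dec j → 0 ≤ N.A (ℓ + 1) i j ∧ ∀ c : Col, N.B c (ℓ + 1) i j = 0) ∧
        (Und j → N.A (ℓ + 1) i j = 0 ∧ ∀ c : Col, N.B c (ℓ + 1) i j = 0) ∧
        (∀ c : Col, N.B c (ℓ + 1) i j ≤ 0)
      (stable, inc, dec)

/-- Channel `i` is stable at layer `ℓ`. -/
def Stable (N : SumGNN Col) (ℓ : ℕ) (i : Fin (N.δ ℓ)) : Prop := (chClass N ℓ i).1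

/-- Channel `i` is increasing at layer `ℓ`. -/
def Increasing (N : SumGNN Col) (ℓ : ℕ) (i : Fin (N.δ ℓ)) : Prop := (chClass N ℓ i).2.1

/-- Channel `i` is decreasing at layer `ℓ`. -/
def Decreasing (N : SumGNN Col) (ℓ : ℕ) (i : Fin (N.δ ℓ)) : Prop := (chClass N ℓ i).2.2

/-- Channel `i` is undetermined at layer `ℓ`: neither stable, increasing, nor
decreasing. -/
def Undetermined (N : SumGNN Col) (ℓ : ℕ) (i : Fin (N.δ ℓ)) : Prop :=
  ¬ Stable N ℓ i ∧ ¬ Increasing N ℓ i ∧ ¬ Decreasing N ℓ i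

/-- The sequence `y_ℓ := ReLU (B^{c_ℓ}_ℓ y_{ℓ-1})` (computed componentwise) from the
definition of unbounded channels, for the colour sequence `cs` and initial vector
`y0`. -/
noncomputable def ySeq (N : SumGNN Col) (cs : ℕ → Col) (y0 : Fin (N.δ 0) → ℝ) :
    (ℓ : ℕ) → Fin (N.δ ℓ) → ℝ
  | 0 => y0
  | (ℓ + 1) => fun i =>
      max (∑ j : Fin (N.δ ℓ), N.B (cs (ℓ + 1)) (ℓ + 1) i j * ySeq N cs y0 ℓ j) 0

/-- Channel `p` is unbounded at layer `L`: there are a Boolean vector `y₀` of dimension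
`δ 0` and colours `c₁, …, c_L` such that, with `y_ℓ := ReLU (B^{c_ℓ}_ℓ y_{ℓ-1})` for
`1 ≤ ℓ ≤ L-1`, the `p`-th component of `B^{c_L}_L y_{L-1}` is negative. -/
noncomputable def Unbounded (N : SumGNN Col) (p : Fin (N.δ N.L)) : Prop :=
  ∃ (y0 : Fin (N.δ 0) → ℝ) (cs : ℕ → Col),
    (∀ k, y0 k = 0 ∨ y0 k = 1) ∧
    (∑ j : Fin (N.δ (N.L - 1)), N.B (cs N.L) N.L p j * ySeq N cs y0 (N.L - 1) j) < 0

/-! Induction on the layer. Passing from `D'` to `D` only adds edges and all computed values are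
non-negative, so neighbour sums of stable or increasing channels can only grow. The sign
conditions of the classification then make every term of the pre-activation of an increasing
(decreasing) channel move up (down), and the activation function is monotone. -/

lemma finsum_mem_le_finsum_mem_of_subset {α M : Type*} [AddCommMonoid M] [PartialOrder M]
    [IsOrderedAddMonoid M] {s' s : Set α} (hs : s.Finite) (hsub : s' ⊆ s) {f g : α → M}
    (hfg : ∀ b ∈ s', f b ≤ g b) (hg : ∀ b ∈ s, 0 ≤ g b) :
    ∑ᶠ b ∈ s', f b ≤ ∑ᶠ b ∈ s, g b := by
  have hs' := hs.subset hsub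
  rw [finsum_mem_eq_finite_toFinset_sum _ hs', finsum_mem_eq_finite_toFinset_sum _ hs]
  calc ∑ b ∈ hs'.toFinset, f b ≤ ∑ b ∈ hs'.toFinset, g b :=
        Finset.sum_le_sum fun b hb => hfg b (hs'.mem_toFinset.mp hb)
    _ ≤ ∑ b ∈ hs.toFinset, g b :=
        Finset.sum_le_sum_of_subset_of_nonneg (hs'.toFinset_subset_toFinset.mpr hsub)
          fun b hb _ => hg b (hs.mem_toFinset.mp hb)

lemma GFact.setOf_binary_mem_finite {D : Set (GFact Col δ)} (hD : D.Finite) (c : Col)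
    (a : ℕ) : {b : ℕ | GFact.binary c a b ∈ D}.Finite :=
  hD.preimage fun _ _ _ _ h => by injection h

lemma mul_le_mul_of_class {s inc dec : Prop} {w x' x : ℝ} (hs : s → x' = x)
    (hinc : inc → x' ≤ x) (hdec : dec → x ≤ x') (hw_inc : inc → 0 ≤ w)
    (hw_dec : dec → w ≤ 0) (hw_und : ¬s ∧ ¬inc ∧ ¬dec → w = 0) : w * x' ≤ w * x := by
  by_cases h_s : s
  · rw [hs h_s]
  by_cases h_inc : inc
  · exact mul_le_mul_of_nonneg_left (hinc h_inc) (hw_inc h_inc)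
  by_cases h_dec : dec
  · exact mul_le_mul_of_nonpos_left (hdec h_dec) (hw_dec h_dec)
  simp [hw_und ⟨h_s, h_inc, h_dec⟩]

lemma mul_le_mul_of_class_of_nonneg {s inc dec : Prop} {w y' y : ℝ}
    (hy : s ∨ inc → y' ≤ y) (hw : 0 ≤ w) (hw_dec : dec → w = 0)
    (hw_und : ¬s ∧ ¬inc ∧ ¬dec → w = 0) : w * y' ≤ w * y := by
  by_cases h : s ∨ inc
  · exact mul_le_mul_of_nonneg_left (hy h) hw
  by_cases h_dec : dec
  · simp [hw_dec h_dec]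
  · simp [hw_und ⟨fun h_s => h (.inl h_s), fun h_inc => h (.inr h_inc), h_dec⟩]

section
variable [Fintype Col] (N : SumGNN Col)

lemma gnnVal_nonneg (D : Set (GFact Col (N.δ 0))) :
    ∀ ℓ a (i : Fin (N.δ ℓ)), 0 ≤ gnnVal N D ℓ a i
  | 0, _, _ => by unfold gnnVal; split <;> norm_num
  | _ + 1, _, _ => N.act_nonneg _ _

noncomputable def neighbourSum (D : Set (GFact Col (N.δ 0))) (ℓ : ℕ) (c : Col) (a : ℕ)
    (j : Fin (N.δ ℓ)) : ℝ :=
  ∑ᶠ b ∈ {b : ℕ | GFact.binary c a b ∈ D}, gnnVal N D ℓ b j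

noncomputable def preactivation (D : Set (GFact Col (N.δ 0))) (ℓ : ℕ) (a : ℕ)
    (i : Fin (N.δ (ℓ + 1))) : ℝ :=
  N.bias (ℓ + 1) i + ∑ j, N.A (ℓ + 1) i j * gnnVal N D ℓ a j
    + ∑ c, ∑ j, N.B c (ℓ + 1) i j * neighbourSum N D ℓ c a j

lemma gnnVal_succ (D : Set (GFact Col (N.δ 0))) (ℓ a : ℕ) (i : Fin (N.δ (ℓ + 1))) :
    gnnVal N D (ℓ + 1) a i = N.act (ℓ + 1) (preactivation N D ℓ a i) := rfl

def RespectsClasses (D' D : Set (GFact Col (N.δ 0))) (ℓ : ℕ) : Prop :=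
  ∀ a (i : Fin (N.δ ℓ)),
    (Stable N ℓ i → gnnVal N D' ℓ a i = gnnVal N D ℓ a i) ∧
    (Increasing N ℓ i → gnnVal N D' ℓ a i ≤ gnnVal N D ℓ a i) ∧
    (Decreasing N ℓ i → gnnVal N D ℓ a i ≤ gnnVal N D' ℓ a i)

variable {N} {D' D : Set (GFact Col (N.δ 0))}

lemma respectsClasses_zero (hsub : D' ⊆ D) : RespectsClasses N D' D 0 := by
  refine fun a i => ⟨False.elim, fun _ => ?_, False.elim⟩
  unfold gnnVal
  split_ifs with h' h <;> first | exact absurd (hsub h') h | norm_num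

lemma neighbourSum_le_of_le (hD : D.Finite) (hsub : D' ⊆ D) {ℓ : ℕ} {j : Fin (N.δ ℓ)}
    (h : ∀ b, gnnVal N D' ℓ b j ≤ gnnVal N D ℓ b j) (c : Col) (a : ℕ) :
    neighbourSum N D' ℓ c a j ≤ neighbourSum N D ℓ c a j :=
  finsum_mem_le_finsum_mem_of_subset (GFact.setOf_binary_mem_finite hD c a)
    (fun _ hb => hsub hb) (fun b _ => h b) fun b _ => gnnVal_nonneg N D ℓ b j

lemma RespectsClasses.neighbourSum_le (hD : D.Finite) (hsub : D' ⊆ D) {ℓ : ℕ}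
    (ih : RespectsClasses N D' D ℓ) {j : Fin (N.δ ℓ)}
    (hj : Stable N ℓ j ∨ Increasing N ℓ j) (c : Col) (a : ℕ) :
    neighbourSum N D' ℓ c a j ≤ neighbourSum N D ℓ c a j :=
  neighbourSum_le_of_le hD hsub
    (fun b => hj.elim (fun hs => ((ih b j).1 hs).le) (ih b j).2.1) c a

lemma RespectsClasses.preactivation_eq {ℓ : ℕ} (ih : RespectsClasses N D' D ℓ) {a : ℕ}
    {i : Fin (N.δ (ℓ + 1))} (hi : Stable N (ℓ + 1) i) :
    preactivation N D' ℓ a i = preactivation N D ℓ a i := by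
  obtain ⟨hB, hA⟩ := hi
  have hA_sum : ∑ j, N.A (ℓ + 1) i j * gnnVal N D' ℓ a j
      = ∑ j, N.A (ℓ + 1) i j * gnnVal N D ℓ a j := by
    refine Finset.sum_congr rfl fun j _ => ?_
    by_cases hA0 : N.A (ℓ + 1) i j = 0
    · simp [hA0]
    · rw [(ih a j).1 (hA j hA0)]
  rw [preactivation, preactivation, hA_sum]
  simp [hB]

lemma RespectsClasses.preactivation_le (hD : D.Finite) (hsub : D' ⊆ D) {ℓ : ℕ}
    (ih : RespectsClasses N D' D ℓ) {a : ℕ} {i : Fin (N.δ (ℓ + 1))}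
    (hi : Increasing N (ℓ + 1) i) : preactivation N D' ℓ a i ≤ preactivation N D ℓ a i := by
  obtain ⟨-, hrow⟩ := hi
  refine add_le_add (add_le_add le_rfl (Finset.sum_le_sum fun j _ => ?_))
    (Finset.sum_le_sum fun c _ => Finset.sum_le_sum fun j _ => ?_)
  · exact mul_le_mul_of_class (ih a j).1 (ih a j).2.1 (ih a j).2.2 (hrow j).1
      (fun h => ((hrow j).2.1 h).1) (fun h => ((hrow j).2.2.1 h).1)
  · exact mul_le_mul_of_class_of_nonneg (fun h => ih.neighbourSum_le hD hsub h c a)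
      ((hrow j).2.2.2 c) (fun h => ((hrow j).2.1 h).2 c) (fun h => ((hrow j).2.2.1 h).2 c)

/-- A decreasing row is an increasing row with all signs flipped. -/
lemma RespectsClasses.preactivation_ge (hD : D.Finite) (hsub : D' ⊆ D) {ℓ : ℕ}
    (ih : RespectsClasses N D' D ℓ) {a : ℕ} {i : Fin (N.δ (ℓ + 1))}
    (hi : Decreasing N (ℓ + 1) i) : preactivation N D ℓ a i ≤ preactivation N D' ℓ a i := by
  obtain ⟨-, hrow⟩ := hi
  refine add_le_add (add_le_add le_rfl (Finset.sum_le_sum fun j _ => ?_))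
    (Finset.sum_le_sum fun c _ => Finset.sum_le_sum fun j _ => ?_)
  · exact le_of_neg_le_neg <| by
      simpa only [neg_mul] using mul_le_mul_of_class (w := -N.A (ℓ + 1) i j) (ih a j).1
        (ih a j).2.1 (ih a j).2.2 (fun h => neg_nonneg.mpr ((hrow j).1 h))
        (fun h => neg_nonpos.mpr ((hrow j).2.1 h).1)
        (fun h => neg_eq_zero.mpr ((hrow j).2.2.1 h).1)
  · exact le_of_neg_le_neg <| by
      simpa only [neg_mul] using mul_le_mul_of_class_of_nonneg (w := -N.B c (ℓ + 1) i j)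
        (fun h => ih.neighbourSum_le hD hsub h c a) (neg_nonneg.mpr ((hrow j).2.2.2 c))
        (fun h => neg_eq_zero.mpr (((hrow j).2.1 h).2 c))
        (fun h => neg_eq_zero.mpr (((hrow j).2.2.1 h).2 c))

lemma RespectsClasses.succ (hD : D.Finite) (hsub : D' ⊆ D) {ℓ : ℕ}
    (ih : RespectsClasses N D' D ℓ) : RespectsClasses N D' D (ℓ + 1) := fun a i =>
  ⟨fun hi => by rw [gnnVal_succ, gnnVal_succ, ih.preactivation_eq hi],
    fun hi => N.act_mono _ (ih.preactivation_le hD hsub hi),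
    fun hi => N.act_mono _ (ih.preactivation_ge hD hsub hi)⟩

lemma respectsClasses (hD : D.Finite) (hsub : D' ⊆ D) (ℓ : ℕ) :
    RespectsClasses N D' D ℓ := by
  induction ℓ with
  | zero => exact respectsClasses_zero hsub
  | succ ℓ ih => exact ih.succ hD hsub

end

theorem channel_class_monotonic_general {Col : Type} [Fintype Col] (N : SumGNN Col)
    (D' D : Set (GFact Col (N.δ 0))) (hD : D.Finite) (hsub : D' ⊆ D)
    (a : ℕ) (ℓ : ℕ) (i : Fin (N.δ ℓ)) :
    (Stable N ℓ i → gnnVal N D' ℓ a i = gnnVal N D ℓ a i) ∧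
    (Increasing N ℓ i → gnnVal N D' ℓ a i ≤ gnnVal N D ℓ a i) ∧
    (Decreasing N ℓ i → gnnVal N D ℓ a i ≤ gnnVal N D' ℓ a i) :=
  respectsClasses hD hsub ℓ a i

/-- Let `D' ⊆ D` be datasets and `v_a` a vertex of `enc D'`; let
`v_ℓ` and `v'_ℓ` be the vectors computed for `v_a` in layer `ℓ` when `N` is applied to
`enc D` and `enc D'` respectively.  If channel `i` is stable at layer `ℓ` then
`v'_ℓ[i] = v_ℓ[i]`; if it is increasing then `v'_ℓ[i] ≤ v_ℓ[i]`; and if it is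
decreasing then `v'_ℓ[i] ≥ v_ℓ[i]`. -/
theorem channel_class_monotonic {Col : Type} [Fintype Col] (N : SumGNN Col)
    (D' D : Set (GFact Col (N.δ 0))) (hD' : D'.Finite) (hD : D.Finite) (hsub : D' ⊆ D)
    (a : ℕ) (ha : a ∈ constsOf D') (ℓ : ℕ) (hℓ : ℓ ≤ N.L) (i : Fin (N.δ ℓ)) :
    (Stable N ℓ i → gnnVal N D' ℓ a i = gnnVal N D ℓ a i) ∧
    (Increasing N ℓ i → gnnVal N D' ℓ a i ≤ gnnVal N D ℓ a i) ∧
    (Decreasing N ℓ i → gnnVal N D ℓ a i ≤ gnnVal N D' ℓ a i) :=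
  channel_class_monotonic_general N D' D hD hsub a ℓ i
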